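/- arXiv:math/0608613 — 9 statements merged into one kernel-verified Lean document; each statement's English description precedes it below -/
import Mathlib

section
/- Let q, j be natural numbers with j ≥ 1, and let S be a nonempty subset of {0, 1, …, j−1}. Let ĥ, P, Φ : ℝ → ℂ be infinitely differentiable functions, and define ĝ : ℝ → ℂ by ĝ(ω) = (1 − exp(−iω))^q · P(ω). Define Ψ : ℝ → ℂ by Ψ(ω) = Φ(ω) · ∏_{k ∈ S} ĝ(2^k ω) · ∏_{k ∈ {0,…,j−1} \ S} ĥ(2^k ω). Then the m-th iterated derivative of Ψ at ω = 0 vanishes for every natural number m < q · |S|, where |S| is the cardinality of S. -/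
open Complex Finset

private lemma itadd (m : ℕ) (f g : ℝ → ℂ) (hf : ContDiff ℝ (⊤ : ℕ∞) f) (hg : ContDiff ℝ (⊤ : ℕ∞) g) :
    iteratedDeriv m (fun x => f x + g x) 0 = iteratedDeriv m f 0 + iteratedDeriv m g 0 := by
  simp only [iteratedDeriv_eq_iteratedFDeriv]
  rw [show (fun x => f x + g x) = f + g from rfl,
    iteratedFDeriv_add_apply (hf.of_le (by exact_mod_cast le_top)).contDiffAt (hg.of_le (by exact_mod_cast le_top)).contDiffAt]
  rfl

private lemma vderiv (a : ℕ) (f : ℝ → ℂ)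
    (hv : ∀ m < a, iteratedDeriv m f 0 = 0) :
    ∀ m < a - 1, iteratedDeriv m (deriv f) 0 = 0 := by
  intro m hm
  rw [← iteratedDeriv_succ']
  exact hv (m + 1) (by omega)

private lemma vmul : ∀ (n a b : ℕ) (f g : ℝ → ℂ), ContDiff ℝ (⊤ : ℕ∞) f → ContDiff ℝ (⊤ : ℕ∞) g →
    a + b = n → (∀ m < a, iteratedDeriv m f 0 = 0) → (∀ m < b, iteratedDeriv m g 0 = 0) →
    ∀ m < a + b, iteratedDeriv m (fun x => f x * g x) 0 = 0 := by
  intro n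
  induction n with
  | zero => intro a b f g _ _ hab _ _ m hm; omega
  | succ n ih =>
    intro a b f g hf hg hab hva hvb m hm
    match m with
    | 0 =>
      simp only [iteratedDeriv_zero]
      rcases Nat.eq_zero_or_pos a with ha | ha
      · have := hvb 0 (by omega)
        simp only [iteratedDeriv_zero] at this
        rw [this, mul_zero]
      · have := hva 0 ha
        simp only [iteratedDeriv_zero] at this
        rw [this, zero_mul]
    | m + 1 =>
      rw [iteratedDeriv_succ']
      have hf' : ContDiff ℝ (⊤ : ℕ∞) (deriv f) := (contDiff_infty_iff_deriv.mp hf).2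
      have hg' : ContDiff ℝ (⊤ : ℕ∞) (deriv g) := (contDiff_infty_iff_deriv.mp hg).2
      have hd : deriv (fun x => f x * g x) =
          fun x => (deriv f x * g x) + (f x * deriv g x) := by
        funext x
        exact deriv_fun_mul (hf.differentiable (by simp) x) (hg.differentiable (by simp) x)
      rw [hd, itadd m _ _ ((hf'.mul hg)) (hf.mul hg')]
      have h1 : iteratedDeriv m (fun x => deriv f x * g x) 0 = 0 := by
        refine ih (a - 1) (min b n) (deriv f) g hf' hg (by omega) (vderiv a f hva)
          (fun k hk => hvb k (by omega)) m (by omega)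
      have h2 : iteratedDeriv m (fun x => f x * deriv g x) 0 = 0 := by
        refine ih (min a n) (b - 1) f (deriv g) hf hg' (by omega)
          (fun k hk => hva k (by omega)) (vderiv b g hvb) m (by omega)
      rw [h1, h2, add_zero]

/-- vanishing derivatives at 0 of a wavelet-packet Fourier transform. -/
theorem stmt_0 (q j : ℕ) (hj : 1 ≤ j) (S : Finset ℕ) (hS : S ⊆ Finset.range j)
    (hSne : S.Nonempty)
    (hhat P Φ : ℝ → ℂ)
    (hhhat : ContDiff ℝ (⊤ : ℕ∞) hhat) (hP : ContDiff ℝ (⊤ : ℕ∞) P) (hΦ : ContDiff ℝ (⊤ : ℕ∞) Φ)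
    (ghat : ℝ → ℂ)
    (hg : ∀ ω : ℝ, ghat ω = (1 - Complex.exp (-(Complex.I * ω)))^q * P ω)
    (Ψ : ℝ → ℂ)
    (hΨ : ∀ ω : ℝ, Ψ ω =
      Φ ω * (∏ k ∈ S, ghat ((2:ℝ)^k * ω)) * ∏ k ∈ Finset.range j \ S, hhat ((2:ℝ)^k * ω)) :
    ∀ m : ℕ, m < q * S.card → iteratedDeriv m Ψ 0 = 0 := by
  -- basic smoothness facts
  have hhhat : ContDiff ℝ (⊤ : ℕ∞) hhat := hhhat.of_le (by simp)
  have hP : ContDiff ℝ (⊤ : ℕ∞) P := hP.of_le (by simp)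
  have hΦ : ContDiff ℝ (⊤ : ℕ∞) Φ := hΦ.of_le (by simp)
  have hscale : ∀ (c : ℝ), ContDiff ℝ (⊤ : ℕ∞) (fun ω : ℝ => c * ω) :=
    fun c => contDiff_const.mul contDiff_id
  have hu : ∀ (c : ℝ), ContDiff ℝ (⊤ : ℕ∞) (fun ω : ℝ => 1 - Complex.exp (-(Complex.I * (c * ω : ℝ)))) := by
    intro c
    apply contDiff_const.sub
    apply Complex.contDiff_exp.comp
    apply ContDiff.neg
    exact contDiff_const.mul (Complex.ofRealCLM.contDiff.comp (hscale c))
  have hgsm : ∀ (c : ℝ), ContDiff ℝ (⊤ : ℕ∞) (fun ω : ℝ => ghat (c * ω)) := by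
    intro c
    have : (fun ω : ℝ => ghat (c * ω)) =
        fun ω : ℝ => (1 - Complex.exp (-(Complex.I * (c * ω : ℝ))))^q * P (c * ω) := by
      funext ω; rw [hg]
    rw [this]
    exact ((hu c).pow q).mul (hP.comp (hscale c))
  -- each ghat (c * ·) has vanishing derivatives up to q
  have hgv : ∀ (c : ℝ), ∀ m < q, iteratedDeriv m (fun ω : ℝ => ghat (c * ω)) 0 = 0 := by
    intro c
    have hu0 : ∀ m < 1, iteratedDeriv m (fun ω : ℝ => 1 - Complex.exp (-(Complex.I * (c * ω : ℝ)))) 0 = 0 := by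
      intro m hm
      interval_cases m
      simp [iteratedDeriv_zero]
    have hpow : ∀ (r : ℕ), (∀ m < r,
        iteratedDeriv m (fun ω : ℝ => (1 - Complex.exp (-(Complex.I * (c * ω : ℝ))))^r) 0 = 0) := by
      intro r
      induction r with
      | zero => intro m hm; omega
      | succ r ihr =>
        have : (fun ω : ℝ => (1 - Complex.exp (-(Complex.I * (c * ω : ℝ))))^(r+1)) =
            fun ω : ℝ => (1 - Complex.exp (-(Complex.I * (c * ω : ℝ)))) *
              (1 - Complex.exp (-(Complex.I * (c * ω : ℝ))))^r := by
          funext ω; ring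
        rw [this]
        exact fun m hm => vmul (1 + r) 1 r _ _ (hu c) ((hu c).pow r) rfl hu0 ihr m (by omega)
    have : (fun ω : ℝ => ghat (c * ω)) =
        fun ω : ℝ => ((1 - Complex.exp (-(Complex.I * (c * ω : ℝ))))^q) * P (c * ω) := by
      funext ω; rw [hg]
    rw [this]
    intro m hm
    exact vmul (q + 0) q 0 _ _ ((hu c).pow q) (hP.comp (hscale c)) rfl (hpow q)
      (fun k hk => by omega) m (by omega)
  -- product over S
  have hprod : ∀ (s : Finset ℕ),
      ContDiff ℝ (⊤ : ℕ∞) (fun ω : ℝ => ∏ k ∈ s, ghat ((2:ℝ)^k * ω)) ∧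
      (∀ m < q * s.card, iteratedDeriv m (fun ω : ℝ => ∏ k ∈ s, ghat ((2:ℝ)^k * ω)) 0 = 0) := by
    intro s
    induction s using Finset.cons_induction with
    | empty => exact ⟨by simpa using contDiff_const, fun m hm => by simp at hm⟩
    | cons a s ha ihs =>
      have heq : (fun ω : ℝ => ∏ k ∈ Finset.cons a s ha, ghat ((2:ℝ)^k * ω)) =
          fun ω : ℝ => ghat ((2:ℝ)^a * ω) * ∏ k ∈ s, ghat ((2:ℝ)^k * ω) := by
        funext ω; rw [Finset.prod_cons]
      rw [heq]
      constructor
      · exact (hgsm _).mul ihs.1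
      · intro m hm
        refine vmul (q + q * s.card) q (q * s.card) _ _ (hgsm _) ihs.1 rfl (hgv _) ihs.2 m ?_
        rw [Finset.card_cons] at hm
        have : q * (s.card + 1) = q + q * s.card := by ring
        omega
  -- assemble
  have hΨeq : Ψ = fun ω : ℝ =>
      (Φ ω * (∏ k ∈ S, ghat ((2:ℝ)^k * ω))) * ∏ k ∈ Finset.range j \ S, hhat ((2:ℝ)^k * ω) := by
    funext ω; exact hΨ ω
  have hrest : ContDiff ℝ (⊤ : ℕ∞) (fun ω : ℝ => ∏ k ∈ Finset.range j \ S, hhat ((2:ℝ)^k * ω)) :=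
    contDiff_prod (fun k _ => hhhat.comp (hscale _))
  intro m hm
  rw [hΨeq]
  have h1 : ∀ m' < 0 + q * S.card,
      iteratedDeriv m' (fun ω : ℝ => Φ ω * (∏ k ∈ S, ghat ((2:ℝ)^k * ω))) 0 = 0 :=
    vmul (0 + q * S.card) 0 (q * S.card) _ _ hΦ (hprod S).1 rfl (fun k hk => by omega) (hprod S).2
  exact vmul (q * S.card + 0) (q * S.card) 0 _ _ (hΦ.mul (hprod S).1) hrest rfl
    (fun k hk => h1 k (by omega)) (fun k hk => by omega) m (by omega)
end

section
/- Let f : ℝ → ℂ be integrable with compact support, let R be a natural number, and suppose ∫_ℝ t^r f(t) dt = 0 for every natural number r < R. Let c : ℤ → ℂ be a finitely supported sequence, let Q be a natural number, and suppose Σ_{n ∈ ℤ} c(n) · n^m = 0 for every natural number m < Q. Fix a real number a and define F : ℝ → ℂ by F(t) = Σ_{n ∈ ℤ} c(n) · f(t − a·n). Then F is integrable with compact support and ∫_ℝ t^r F(t) dt = 0 for every natural number r < R + Q. -/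
/-!
Substituting `t ↦ t + b` and expanding `(t + b)^r` binomially expresses the `r`-th moment of
`f(· - b)` through the moments `M_j` of `f` with `j ≤ r`, weighted by `b^(r - j)`. Summing over
`n` with `b = a n`, the `j`-th term of the `r`-th moment of `F` is a multiple of
`M_j · ∑ₙ c n nʳ⁻ʲ`; when `r < R + Q`, either `j < R` and `M_j = 0`, or `r - j < Q` and the
discrete moment of `c` vanishes.
-/

open MeasureTheory Finset

theorem MeasureTheory.Integrable.continuous_mul_of_hasCompactSupport {X R : Type*}
    [TopologicalSpace X] [MeasurableSpace X] [OpensMeasurableSpace X] [T2Space X] [NormedRing R]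
    [SecondCountableTopologyEither X R] {μ : Measure X} {f g : X → R}
    (hf : Integrable f μ) (hfc : HasCompactSupport f) (hg : Continuous g) :
    Integrable (fun x => g x * f x) μ := by
  rw [← integrableOn_iff_integrable_of_support_subset
    ((Function.support_mul_subset_right _ _).trans (subset_tsupport f))]
  exact hf.integrableOn.continuousOn_mul hg.continuousOn hfc

noncomputable def moment (f : ℝ → ℂ) (k : ℕ) : ℂ :=
  ∫ t : ℝ, (t : ℂ) ^ k * f t

section Moments

variable {f : ℝ → ℂ} (hf : Integrable f) (hfc : HasCompactSupport f)
include hf hfc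

theorem integrable_pow_mul (k : ℕ) : Integrable (fun t : ℝ => (t : ℂ) ^ k * f t) :=
  hf.continuous_mul_of_hasCompactSupport hfc (by fun_prop)

theorem moment_comp_sub (b : ℝ) (k : ℕ) :
    moment (fun t => f (t - b)) k =
      ∑ j ∈ range (k + 1), (k.choose j : ℂ) * (b : ℂ) ^ (k - j) * moment f j := by
  have hbinom : ∀ t : ℝ, ((t + b : ℝ) : ℂ) ^ k * f t =
      ∑ j ∈ range (k + 1), (k.choose j : ℂ) * (b : ℂ) ^ (k - j) * ((t : ℂ) ^ j * f t) := by
    intro t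
    push_cast
    rw [add_pow, sum_mul]
    exact sum_congr rfl fun j _ => by ring
  calc moment (fun t => f (t - b)) k
      = ∫ t : ℝ, ((t + b : ℝ) : ℂ) ^ k * f t := by
        rw [moment]
        simpa only [sub_add_cancel] using
          integral_sub_right_eq_self (fun t : ℝ => ((t + b : ℝ) : ℂ) ^ k * f t) b
    _ = _ := by
        simp_rw [hbinom]
        rw [integral_finsetSum _ fun j _ => (integrable_pow_mul hf hfc j).const_mul _]
        simp_rw [integral_const_mul, moment]

theorem moment_finset_sum_translate {ι : Type*} (s : Finset ι) (c : ι → ℂ) (b : ι → ℝ)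
    (r : ℕ) :
    moment (fun t => ∑ n ∈ s, c n * f (t - b n)) r =
      ∑ j ∈ range (r + 1),
        (r.choose j : ℂ) * moment f j * ∑ n ∈ s, c n * (b n : ℂ) ^ (r - j) := by
  have hterm : ∀ n, Integrable (fun t : ℝ => (t : ℂ) ^ r * (c n * f (t - b n))) := fun n => by
    simpa only [mul_left_comm] using
      (integrable_pow_mul (hf.comp_sub_right (b n)) (hfc.comp_homeomorph
        (Homeomorph.subRight (b n))) r).const_mul (c n)
  calc moment (fun t => ∑ n ∈ s, c n * f (t - b n)) r
      = ∑ n ∈ s, c n * moment (fun t => f (t - b n)) r := by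
        simp only [moment, mul_sum]
        rw [integral_finsetSum _ fun n _ => hterm n]
        simp_rw [← integral_const_mul, mul_left_comm]
    _ = _ := by
        simp_rw [moment_comp_sub hf hfc, mul_sum]
        rw [sum_comm]
        exact sum_congr rfl fun j _ => sum_congr rfl fun n _ => by ring

end Moments

/-- discrete filtering raises the number of vanishing moments. -/
theorem stmt_1 (f : ℝ → ℂ) (hf : Integrable f) (hfc : HasCompactSupport f)
    (R : ℕ) (hmomf : ∀ r : ℕ, r < R → ∫ t : ℝ, (t : ℂ) ^ r * f t = 0)
    (c : ℤ → ℂ) (hc : (Function.support c).Finite)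
    (Q : ℕ) (hmomc : ∀ m : ℕ, m < Q → ∑ᶠ n : ℤ, c n * (n : ℂ) ^ m = 0)
    (a : ℝ) (F : ℝ → ℂ)
    (hF : ∀ t : ℝ, F t = ∑ᶠ n : ℤ, c n * f (t - a * n)) :
    Integrable F ∧ HasCompactSupport F ∧
      ∀ r : ℕ, r < R + Q → ∫ t : ℝ, (t : ℂ) ^ r * F t = 0 := by
  have hs : ∀ g : ℤ → ℂ, (Function.support fun n => c n * g n) ⊆ hc.toFinset := fun g => by
    rw [Set.Finite.coe_toFinset]; exact Function.support_mul_subset_left c g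
  have hF' : F = fun t => ∑ n ∈ hc.toFinset, c n * f (t - a * n) :=
    funext fun t => (hF t).trans (finsum_eq_sum_of_support_subset _ (hs _))
  subst hF'
  refine ⟨integrable_finsetSum _ fun n _ => (hf.comp_sub_right _).const_mul _,
    ?_, fun r hr => ?_⟩
  · have hcs := HasCompactSupport.finset_sum (s := hc.toFinset)
      (f := fun n t => c n * f (t - a * n)) fun n _ =>
        (hfc.comp_homeomorph (Homeomorph.subRight _)).mul_left
    simpa only [sum_fn] using hcs
  change moment _ r = 0
  rw [moment_finset_sum_translate hf hfc]
  refine sum_eq_zero fun j hj => ?_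
  rcases lt_or_ge j R with hjR | hjR
  · rw [moment, hmomf j hjR, mul_zero, zero_mul]
  · have hjQ : r - j < Q := by have := mem_range.mp hj; omega
    have hdisc : ∑ n ∈ hc.toFinset, c n * ((a * n : ℝ) : ℂ) ^ (r - j) =
        (a : ℂ) ^ (r - j) * ∑ᶠ n : ℤ, c n * (n : ℂ) ^ (r - j) := by
      rw [finsum_eq_sum_of_support_subset _ (hs _), mul_sum]
      exact sum_congr rfl fun n _ => by push_cast; ring
    rw [hdisc, hmomc _ hjQ, mul_zero, mul_zero]
end

section
/- Let q be a natural number and Q a polynomial with complex coefficients, and let A = (1 − X)^q · Q as a polynomial over ℂ. Then for every natural number m < q, the sum over all n of A.coeff(n) · n^m equals 0. -/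
open Polynomial

lemma coeff_X_mul_deriv (A : Polynomial ℂ) (n : ℕ) :
    ((X : Polynomial ℂ) * derivative A).coeff n = (n : ℂ) * A.coeff n := by
  cases n with
  | zero => simp
  | succ n =>
    rw [coeff_X_mul, coeff_derivative]
    push_cast
    ring

lemma dvd_X_mul_deriv (q : ℕ) (A : Polynomial ℂ)
    (h : (1 - X) ^ (q + 1) ∣ A) :
    (1 - X) ^ q ∣ (X : Polynomial ℂ) * derivative A := by
  obtain ⟨B, rfl⟩ := h
  apply Dvd.dvd.mul_left
  rw [derivative_mul, derivative_pow]
  apply dvd_add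
  · apply dvd_mul_of_dvd_left
    apply dvd_mul_of_dvd_left
    simp only [Nat.add_sub_cancel]
    exact dvd_mul_left _ _
  · exact dvd_mul_of_dvd_left (pow_dvd_pow _ (Nat.le_succ q)) _

lemma mom_step (A : Polynomial ℂ) (m : ℕ) :
    ∑ n ∈ A.support, A.coeff n * (n : ℂ) ^ (m + 1) =
    ∑ n ∈ ((X : Polynomial ℂ) * derivative A).support,
      ((X : Polynomial ℂ) * derivative A).coeff n * (n : ℂ) ^ m := by
  rw [← Finset.sum_subset (h := ?hsub) (hf := ?hzero)]
  · apply Finset.sum_congr rfl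
    intro n _
    rw [coeff_X_mul_deriv]
    ring
  · intro n hn
    rw [mem_support_iff] at hn ⊢
    rw [coeff_X_mul_deriv] at hn
    intro h
    exact hn (by rw [h, mul_zero])
  · intro n _ hn
    have h2 : (n : ℂ) * A.coeff n = 0 := by
      rw [← coeff_X_mul_deriv]
      exact notMem_support_iff.mp hn
    calc A.coeff n * (n : ℂ) ^ (m + 1) = ((n : ℂ) * A.coeff n) * (n : ℂ) ^ m := by ring
      _ = 0 := by rw [h2, zero_mul]

lemma mom_zero (q : ℕ) (A : Polynomial ℂ) (hq : 0 < q)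
    (h : (1 - X) ^ q ∣ A) :
    ∑ n ∈ A.support, A.coeff n * (n : ℂ) ^ 0 = 0 := by
  have heval : A.eval 1 = 0 := by
    obtain ⟨B, rfl⟩ := h
    simp [zero_pow (by omega : q ≠ 0), eval_pow]
  rw [eval_eq_sum, Polynomial.sum] at heval
  simpa using heval

lemma mom_aux : ∀ (m q : ℕ) (A : Polynomial ℂ), m < q → (1 - X) ^ q ∣ A →
    ∑ n ∈ A.support, A.coeff n * (n : ℂ) ^ m = 0 := by
  intro m
  induction m with
  | zero => exact fun q A hq h => mom_zero q A hq h
  | succ m ih =>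
    intro q A hq h
    obtain ⟨q', rfl⟩ : ∃ q', q = q' + 1 := ⟨q - 1, by omega⟩
    rw [mom_step]
    exact ih q' _ (by omega) (dvd_X_mul_deriv q' A h)

/-- a polynomial divisible by `(1 - X)^q` has vanishing discrete moments
of order `< q`. -/
theorem stmt_2 (q : ℕ) (Q A : Polynomial ℂ) (hA : A = (1 - Polynomial.X) ^ q * Q) :
    ∀ m : ℕ, m < q → ∑ n ∈ A.support, A.coeff n * (n : ℂ) ^ m = 0 := by
  intro m hm
  exact mom_aux m q A hm ⟨Q, hA⟩
end

section
/- Let N₁ ≤ N₂ be integers and set N* = max(|N₁|, |N₂|). Let h, g : ℤ → ℂ be sequences supported in {N₁, …, N₂}. Suppose ψ : ℕ → ℕ → (ℝ → ℂ) is a family of functions such that the support of ψ 0 0 is contained in [N₁, N₂], and for all j ∈ ℕ and all p with 0 ≤ p < 2^j: ψ (j+1) (2p) (t) = Σ_{n ∈ ℤ} h(n) · ψ j p (t − 2^j n) and ψ (j+1) (2p+1) (t) = Σ_{n ∈ ℤ} g(n) · ψ j p (t − 2^j n) for all t ∈ ℝ. Then for every j ∈ ℕ and every p with 0 ≤ p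 < 2^j, the support of ψ j p is contained in the interval [−2^j (N*+1), 2^j (N*+1)]. -/
/-!
Each refinement step convolves a function supported in `[-r, r]` with a filter supported in
`[-N*, N*]` on the lattice `2^j ℤ`, so the support radius grows from `r` to at most
`r + 2^j N*`. With `r = 2^j (N* + 1)` this is `2^j (2N* + 1) ≤ 2^(j+1) (N* + 1)`, and the
induction starts from `[N₁, N₂] ⊆ [-(N* + 1), N* + 1]`.
-/

open Set Function

lemma Icc_subset_Icc_neg_max_abs {α : Type*} [AddCommGroup α] [LinearOrder α]
    [IsOrderedAddMonoid α] (a b : α) :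
    Icc a b ⊆ Icc (-max |a| |b|) (max |a| |b|) :=
  fun _ hx ↦ abs_le.mp (abs_le_max_abs_abs hx.1 hx.2)

lemma exists_ne_zero_of_finsum_ne_zero {α M : Type*} [AddCommMonoid M] {f : α → M}
    (h : ∑ᶠ i, f i ≠ 0) : ∃ i, f i ≠ 0 := by
  by_contra! hf
  exact h (finsum_eq_zero_of_forall_eq_zero hf)

lemma support_subset_Icc_of_eq_finsum_translate {R : Type*} [NonUnitalNonAssocSemiring R]
    {c : ℤ → R} {M : ℤ} (hc : support c ⊆ Icc (-M) M)
    {f : ℝ → R} {r : ℝ} (hf : support f ⊆ Icc (-r) r) {a : ℝ} (ha : 0 ≤ a)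
    {R' : ℝ} (hR' : r + a * M ≤ R')
    {F : ℝ → R} (hF : ∀ t, F t = ∑ᶠ n : ℤ, c n * f (t - a * n)) :
    support F ⊆ Icc (-R') R' := by
  intro t ht
  rw [mem_support, hF] at ht
  obtain ⟨n, hn⟩ := exists_ne_zero_of_finsum_ne_zero ht
  have hnM : |(n : ℝ)| ≤ M := by
    exact_mod_cast abs_le.mpr (hc (left_ne_zero_of_mul hn))
  have hshift : |t - a * n| ≤ r := abs_le.mpr (hf (right_ne_zero_of_mul hn))
  rw [mem_Icc, ← abs_le]
  calc |t| = |(t - a * n) + a * n| := by ring_nf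
    _ ≤ |t - a * n| + a * |(n : ℝ)| :=
        (abs_add_le _ _).trans_eq (by rw [abs_mul, abs_of_nonneg ha])
    _ ≤ r + a * M := by gcongr
    _ ≤ R' := hR'

lemma two_pow_mul_add_one_add_two_pow_mul_le (j : ℕ) (M : ℝ) :
    2 ^ j * (M + 1) + 2 ^ j * M ≤ 2 ^ (j + 1) * (M + 1) := by
  have : (0 : ℝ) ≤ 2 ^ j := by positivity
  rw [pow_succ]
  nlinarith

theorem stmt_3_general (N₁ N₂ : ℤ) (Nstar : ℤ) (hNstar : Nstar = max |N₁| |N₂|)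
    (h g : ℤ → ℂ)
    (hh : Function.support h ⊆ Set.Icc N₁ N₂)
    (hg : Function.support g ⊆ Set.Icc N₁ N₂)
    (ψ : ℕ → ℕ → ℝ → ℂ)
    (hψ0 : Function.support (ψ 0 0) ⊆ Set.Icc (N₁ : ℝ) (N₂ : ℝ))
    (hrec : ∀ j p : ℕ, p < 2 ^ j →
      (∀ t : ℝ, ψ (j + 1) (2 * p) t = ∑ᶠ n : ℤ, h n * ψ j p (t - 2 ^ j * n)) ∧
      (∀ t : ℝ, ψ (j + 1) (2 * p + 1) t = ∑ᶠ n : ℤ, g n * ψ j p (t - 2 ^ j * n))) :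
    ∀ j p : ℕ, p < 2 ^ j →
      Function.support (ψ j p) ⊆
        Set.Icc (-(2 ^ j * ((Nstar : ℝ) + 1))) (2 ^ j * ((Nstar : ℝ) + 1)) := by
  have hNstarR : (Nstar : ℝ) = max |(N₁ : ℝ)| |(N₂ : ℝ)| := by push_cast [hNstar]; rfl
  have hfilter {c : ℤ → ℂ} (hc : support c ⊆ Icc N₁ N₂) : support c ⊆ Icc (-Nstar) Nstar :=
    hNstar ▸ hc.trans (Icc_subset_Icc_neg_max_abs N₁ N₂)
  intro j
  induction j with
  | zero =>
    intro p hp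
    obtain rfl : p = 0 := by omega
    refine hψ0.trans ((Icc_subset_Icc_neg_max_abs _ _).trans ?_)
    rw [← hNstarR, pow_zero, one_mul]
    exact Icc_subset_Icc (by linarith) (by linarith)
  | succ j ih =>
    intro p hp
    obtain ⟨q, rfl | rfl⟩ := Nat.even_or_odd' p
    all_goals
      have hq : q < 2 ^ j := by rw [pow_succ] at hp; omega
      have hradius := two_pow_mul_add_one_add_two_pow_mul_le j Nstar
    · exact support_subset_Icc_of_eq_finsum_translate (hfilter hh) (ih q hq) (by positivity)
        hradius (hrec j q hq).1
    · exact support_subset_Icc_of_eq_finsum_translate (hfilter hg) (ih q hq) (by positivity)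
        hradius (hrec j q hq).2

/-- Lemma 2 of the paper: support of wavelet packet functions. -/
theorem stmt_3 (N₁ N₂ : ℤ) (hN : N₁ ≤ N₂) (Nstar : ℤ) (hNstar : Nstar = max |N₁| |N₂|)
    (h g : ℤ → ℂ)
    (hh : Function.support h ⊆ Set.Icc N₁ N₂)
    (hg : Function.support g ⊆ Set.Icc N₁ N₂)
    (ψ : ℕ → ℕ → ℝ → ℂ)
    (hψ0 : Function.support (ψ 0 0) ⊆ Set.Icc (N₁ : ℝ) (N₂ : ℝ))
    (hrec : ∀ j p : ℕ, p < 2 ^ j →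
      (∀ t : ℝ, ψ (j + 1) (2 * p) t = ∑ᶠ n : ℤ, h n * ψ j p (t - 2 ^ j * n)) ∧
      (∀ t : ℝ, ψ (j + 1) (2 * p + 1) t = ∑ᶠ n : ℤ, g n * ψ j p (t - 2 ^ j * n))) :
    ∀ j p : ℕ, p < 2 ^ j →
      Function.support (ψ j p) ⊆
        Set.Icc (-(2 ^ j * ((Nstar : ℝ) + 1))) (2 ^ j * ((Nstar : ℝ) + 1)) :=
  stmt_3_general N₁ N₂ Nstar hNstar h g hh hg ψ hψ0 hrec
end

section
/- Let f, g : ℝ → ℝ be integrable functions with compact support, and let R₁, R₂ be natural numbers such that ∫_ℝ t^r f(t) dt = 0 for every natural number r < R₁ and ∫_ℝ t^r g(t) dt = 0 for every natural number r < R₂. Define the cross-correlation Λ(h) = ∫_ℝ f(t) g(t − h) dt. Then ∫_ℝ h^m Λ(h) dh = 0 for every natural number m < R₁ + R₂. -/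
open MeasureTheory

/-- Shear homeomorphism `(x, y) ↦ (x + y, y)` on `ℝ × ℝ`. -/
noncomputable def myShear : (ℝ × ℝ) ≃ₜ (ℝ × ℝ) where
  toFun p := (p.1 + p.2, p.2)
  invFun p := (p.1 - p.2, p.2)
  left_inv p := by simp
  right_inv p := by simp
  continuous_toFun := by continuity
  continuous_invFun := by continuity

/-- A polynomial times a compactly supported integrable function is integrable. -/
lemma aux_poly_int (g : ℝ → ℝ) (hg : Integrable g) (hgc : HasCompactSupport g) (j : ℕ) :
    Integrable (fun s : ℝ => s ^ j * g s) := by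
  obtain ⟨C, hC⟩ := hgc.exists_bound_of_continuousOn (continuous_pow j).continuousOn
  have heq : (fun s : ℝ => s ^ j * g s)
      = fun s : ℝ => (tsupport g).indicator (fun x : ℝ => x ^ j) s * g s := by
    funext s
    by_cases hs : s ∈ tsupport g
    · simp [Set.indicator_of_mem hs]
    · simp [Set.indicator_of_notMem hs, image_eq_zero_of_notMem_tsupport hs]
  rw [heq]
  refine hg.bdd_mul (c := max C 0)
    (((continuous_pow j).measurable.indicator (isClosed_tsupport g).measurableSet).aestronglyMeasurable) ?_
  filter_upwards with x
  by_cases hx : x ∈ tsupport g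
  · simp only [Set.indicator_of_mem hx]
    exact le_max_of_le_left (hC x hx)
  · simp [Set.indicator_of_notMem hx]

/-- the cross-correlation of functions with `R₁` and `R₂` vanishing moments
has `R₁ + R₂` vanishing moments. -/
theorem stmt_5 (f g : ℝ → ℝ) (hf : Integrable f) (hg : Integrable g)
    (hfc : HasCompactSupport f) (hgc : HasCompactSupport g)
    (R₁ R₂ : ℕ)
    (hmf : ∀ r : ℕ, r < R₁ → ∫ t : ℝ, t ^ r * f t = 0)
    (hmg : ∀ r : ℕ, r < R₂ → ∫ t : ℝ, t ^ r * g t = 0)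
    (Λ : ℝ → ℝ) (hΛ : ∀ h : ℝ, Λ h = ∫ t : ℝ, f t * g (t - h)) :
    ∀ m : ℕ, m < R₁ + R₂ → ∫ h : ℝ, h ^ m * Λ h = 0 := by
  intro m hm
  set P : ℝ × ℝ → ℝ := fun p => (p.1 - p.2) ^ m * (f p.1 * g p.2) with hPdef
  -- the product f(u) g(s) is integrable on ℝ²
  have hfg : Integrable (fun p : ℝ × ℝ => f p.1 * g p.2) (volume.prod volume) :=
    hf.mul_prod hg
  -- P is integrable on ℝ²
  have hK : IsCompact (tsupport f ×ˢ tsupport g) := hfc.prod hgc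
  have hP : Integrable P (volume.prod volume) := by
    obtain ⟨C, hC⟩ := hK.exists_bound_of_continuousOn
      ((continuous_fst.sub continuous_snd).pow m).continuousOn
    have heq : P = fun p : ℝ × ℝ =>
        (tsupport f ×ˢ tsupport g).indicator (fun q : ℝ × ℝ => (q.1 - q.2) ^ m) p
          * (f p.1 * g p.2) := by
      funext p
      by_cases hp : p ∈ tsupport f ×ˢ tsupport g
      · simp [hPdef, Set.indicator_of_mem hp]
      · have : f p.1 * g p.2 = 0 := by
          rcases not_and_or.mp hp with h1 | h1
          · rw [image_eq_zero_of_notMem_tsupport h1, zero_mul]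
          · rw [image_eq_zero_of_notMem_tsupport h1, mul_zero]
        simp [hPdef, Set.indicator_of_notMem hp, this]
    rw [heq]
    refine hfg.bdd_mul (c := max C 0)
      ((((continuous_fst.sub continuous_snd).pow m).measurable.indicator
        ((hK.isClosed).measurableSet)).aestronglyMeasurable) ?_
    filter_upwards with x
    by_cases hx : x ∈ tsupport f ×ˢ tsupport g
    · simp only [Set.indicator_of_mem hx]
      exact le_max_of_le_left (hC x hx)
    · simp [Set.indicator_of_notMem hx]
  -- measure preserving shear
  have hτ : MeasurePreserving (fun z : ℝ × ℝ => (z.1 + z.2, z.2))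
      (volume.prod volume) (volume.prod volume) := measurePreserving_add_prod volume volume
  have hemb : MeasurableEmbedding (fun z : ℝ × ℝ => (z.1 + z.2, z.2)) :=
    myShear.measurableEmbedding
  have hW : Integrable (fun z : ℝ × ℝ => P (z.1 + z.2, z.2)) (volume.prod volume) :=
    (hτ.integrable_comp_emb hemb).mpr hP
  -- pointwise identity
  have hpt : ∀ h : ℝ, h ^ m * Λ h = ∫ s : ℝ, P (h + s, s) := by
    intro h
    rw [hΛ h, ← integral_const_mul]
    rw [← integral_add_right_eq_self (fun t : ℝ => h ^ m * (f t * g (t - h))) h]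
    simp [hPdef, add_sub_cancel_right, add_comm]
  calc ∫ h : ℝ, h ^ m * Λ h
      = ∫ h : ℝ, ∫ s : ℝ, P (h + s, s) := by simp_rw [hpt]
    _ = ∫ z : ℝ × ℝ, P (z.1 + z.2, z.2) ∂(volume.prod volume) := integral_integral (f := fun h s => P (h + s, s)) hW
    _ = ∫ p : ℝ × ℝ, P p ∂(volume.prod volume) := hτ.integral_comp hemb P
    _ = 0 := by
        have hexp : P = fun p : ℝ × ℝ => ∑ k ∈ Finset.range (m + 1),
            ((-1 : ℝ) ^ (k + m) * (m.choose k : ℝ)) *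
              ((p.1 ^ k * f p.1) * (p.2 ^ (m - k) * g p.2)) := by
          funext p
          rw [hPdef]
          simp only [sub_pow, Finset.sum_mul]
          refine Finset.sum_congr rfl fun k _ => ?_
          ring
        rw [hexp, integral_finset_sum]
        · refine Finset.sum_eq_zero fun k hk => ?_
          rw [integral_const_mul,
            integral_prod_mul (f := fun u : ℝ => u ^ k * f u) (g := fun s : ℝ => s ^ (m - k) * g s)]
          rcases lt_or_ge k R₁ with h1 | h1
          · rw [hmf k h1, zero_mul, mul_zero]
          · have h2 : m - k < R₂ := by
              have := Finset.mem_range.mp hk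
              omega
            rw [hmg _ h2, mul_zero, mul_zero]
        · intro k _
          exact (((aux_poly_int f hf hfc k).mul_prod (aux_poly_int g hg hgc (m - k)))).const_mul _
end

section
/- Let f, g : ℝ → ℝ be integrable functions with compact support, and let R be a natural number such that ∫_ℝ t^r f(t) dt = 0 for every natural number r < R. Define the cross-correlation Λ(h) = ∫_ℝ f(t) g(t − h) dt. Then ∫_ℝ h^m Λ(h) dh = 0 for every natural number m < R. -/
open MeasureTheory
open Pointwise

lemma aux_int {g : ℝ → ℝ} (hg : Integrable g) (hgc : HasCompactSupport g)
    (φ : ℝ → ℝ) (hφ : Continuous φ) : Integrable fun u => φ u * g u := by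
  obtain ⟨C, hC⟩ := hgc.exists_bound_of_continuousOn hφ.continuousOn
  refine (hg.norm.const_mul C).mono'
    (hφ.aestronglyMeasurable.mul hg.aestronglyMeasurable) ?_
  filter_upwards with x
  by_cases hx : g x = 0
  · simp [hx]
  · have hmem : x ∈ tsupport g := subset_tsupport g hx
    calc ‖φ x * g x‖ = ‖φ x‖ * ‖g x‖ := norm_mul _ _
      _ ≤ C * ‖g x‖ := by
          have := hC x hmem
          exact mul_le_mul_of_nonneg_right (le_trans (le_abs_self _) (by simpa using this)) (norm_nonneg _)

/-- the cross-correlation with a function having `R` vanishing moments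
has `R` vanishing moments. -/
theorem stmt_6 (f g : ℝ → ℝ) (hf : Integrable f) (hg : Integrable g)
    (hfc : HasCompactSupport f) (hgc : HasCompactSupport g)
    (R : ℕ)
    (hmf : ∀ r : ℕ, r < R → ∫ t : ℝ, t ^ r * f t = 0)
    (Λ : ℝ → ℝ) (hΛ : ∀ h : ℝ, Λ h = ∫ t : ℝ, f t * g (t - h)) :
    ∀ m : ℕ, m < R → ∫ h : ℝ, h ^ m * Λ h = 0 := by
  intro m hm
  -- joint integrability of the plain integrand
  have hg' : Integrable (fun u : ℝ => g (-u)) := hg.comp_neg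
  have hGint : Integrable (fun p : ℝ × ℝ => f p.2 * g (p.2 - p.1))
      ((volume : Measure ℝ).prod volume) := by
    have := hf.convolution_integrand (ContinuousLinearMap.mul ℝ ℝ) hg'
    simpa [neg_sub] using this
  -- bound on the first coordinate on the support
  obtain ⟨M, hM⟩ := isBounded_iff_forall_norm_le.mp (hfc.isBounded.sub hgc.isBounded)
  have hFint : Integrable (fun p : ℝ × ℝ => p.1 ^ m * (f p.2 * g (p.2 - p.1)))
      ((volume : Measure ℝ).prod volume) := by
    refine (hGint.norm.const_mul (M ^ m)).mono'
      (((continuous_pow m).comp continuous_fst).aestronglyMeasurable.mul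
        hGint.aestronglyMeasurable) ?_
    filter_upwards with p
    by_cases hp : f p.2 * g (p.2 - p.1) = 0
    · simp [hp]
    · have h1 : f p.2 ≠ 0 := fun h => hp (by simp [h])
      have h2 : g (p.2 - p.1) ≠ 0 := fun h => hp (by simp [h])
      have hmem : p.1 ∈ tsupport f - tsupport g :=
        ⟨p.2, subset_tsupport f h1, p.2 - p.1, subset_tsupport g h2, by ring⟩
      have hb : ‖p.1‖ ≤ M := hM _ hmem
      calc ‖p.1 ^ m * (f p.2 * g (p.2 - p.1))‖
          = ‖p.1‖ ^ m * ‖f p.2 * g (p.2 - p.1)‖ := by rw [norm_mul, norm_pow]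
        _ ≤ M ^ m * ‖f p.2 * g (p.2 - p.1)‖ :=
            mul_le_mul_of_nonneg_right (pow_le_pow_left₀ (norm_nonneg _) hb m) (norm_nonneg _)
  have step1 : (∫ h : ℝ, h ^ m * Λ h) = ∫ h : ℝ, ∫ t : ℝ, h ^ m * (f t * g (t - h)) := by
    refine integral_congr_ae (Filter.Eventually.of_forall fun h => ?_)
    show h ^ m * Λ h = ∫ t : ℝ, h ^ m * (f t * g (t - h))
    rw [hΛ, ← integral_const_mul]
  have step2 : (∫ h : ℝ, ∫ t : ℝ, h ^ m * (f t * g (t - h)))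
      = ∫ t : ℝ, ∫ h : ℝ, h ^ m * (f t * g (t - h)) :=
    integral_integral_swap hFint
  have step3 : ∀ t : ℝ, (∫ h : ℝ, h ^ m * (f t * g (t - h)))
      = f t * ∫ u : ℝ, (t - u) ^ m * g u := by
    intro t
    have e1 : (∫ h : ℝ, h ^ m * (f t * g (t - h)))
        = f t * ∫ h : ℝ, h ^ m * g (t - h) := by
      rw [← integral_const_mul]
      exact integral_congr_ae (Filter.Eventually.of_forall fun h => by ring)
    rw [e1]
    congr 1
    have := integral_sub_left_eq_self (fun u : ℝ => (t - u) ^ m * g u) (volume : Measure ℝ) t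
    simpa using this
  -- expand (t - u)^m binomially
  have hexp : ∀ t : ℝ, (∫ u : ℝ, (t - u) ^ m * g u)
      = ∑ k ∈ Finset.range (m + 1),
          (∫ u : ℝ, ((-u) ^ (m - k) * (m.choose k : ℝ)) * g u) * t ^ k := by
    intro t
    have e : ∀ u : ℝ, (t - u) ^ m * g u
        = ∑ k ∈ Finset.range (m + 1),
            (((-u) ^ (m - k) * (m.choose k : ℝ)) * g u) * t ^ k := by
      intro u
      rw [sub_eq_add_neg, add_pow, Finset.sum_mul]
      exact Finset.sum_congr rfl fun k _ => by ring
    simp_rw [e]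
    rw [integral_finset_sum _ fun k _ =>
      (aux_int hg hgc (fun u => (-u) ^ (m - k) * (m.choose k : ℝ)) (by continuity)).mul_const _]
    exact Finset.sum_congr rfl fun k _ => integral_mul_const _ _
  rw [step1, step2]
  calc (∫ t : ℝ, ∫ h : ℝ, h ^ m * (f t * g (t - h)))
      = ∫ t : ℝ, ∑ k ∈ Finset.range (m + 1),
          (∫ u : ℝ, ((-u) ^ (m - k) * (m.choose k : ℝ)) * g u) * (t ^ k * f t) := by
        refine integral_congr_ae (Filter.Eventually.of_forall fun t => ?_)
        show (∫ h : ℝ, h ^ m * (f t * g (t - h))) = _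
        rw [step3, hexp, Finset.mul_sum]
        exact Finset.sum_congr rfl fun k _ => by ring
    _ = ∑ k ∈ Finset.range (m + 1),
          (∫ u : ℝ, ((-u) ^ (m - k) * (m.choose k : ℝ)) * g u) * ∫ t : ℝ, t ^ k * f t := by
        rw [integral_finset_sum _ fun k _ => ?_]
        · exact Finset.sum_congr rfl fun k _ => integral_const_mul _ _
        · have : Integrable fun t : ℝ => t ^ k * f t :=
            aux_int hf hfc (fun t => t ^ k) (by continuity)
          exact this.const_mul _
    _ = 0 := by
        refine Finset.sum_eq_zero fun k hk => ?_
        rw [hmf k (lt_of_le_of_lt (Nat.lt_succ_iff.mp (Finset.mem_range.mp hk)) hm), mul_zero]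
end

section
/- Let d ∈ (0, 1/2), L > 0, and q a natural number. Let Λ : ℝ → ℝ be integrable with support contained in [−L, L] and such that ∫_ℝ h^m Λ(h) dh = 0 for every natural number m < q. Then there exists a constant C > 0 such that for every real α with |α| ≥ 2L, one has |∫_ℝ |h + α|^{2d−1} Λ(h) dh| ≤ C · |α|^{2d−1−q}. -/
/-!
On `[-L, L]` the kernel `h ↦ |h + α| ^ p` is smooth as soon as `|α| ≥ 2L`, because then
`|h + α| ≥ |α| / 2`. Subtracting its Taylor polynomial of degree `< q` does not change the
integral against `Λ`, whose moments of order `< q` vanish, and the Taylor remainder is bounded by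
`(2L) ^ q` times the `q`-th derivative `(p)_q |h + α| ^ (p - q)`, which is `O(|α| ^ (p - q))`.
-/

open MeasureTheory Set Filter Topology

theorem MeasureTheory.Integrable.continuousOn_mul_of_support_subset {μ : Measure ℝ} {K : Set ℝ}
    (hK : IsCompact K) {g Λ : ℝ → ℝ} (hg : ContinuousOn g K) (hΛ : Integrable Λ μ)
    (hsupp : Function.support Λ ⊆ K) : Integrable (fun h => g h * Λ h) μ :=
  (integrableOn_iff_integrable_of_support_subset
    ((Function.support_mul_subset_right _ _).trans hsupp)).1
    (hΛ.integrableOn.continuousOn_mul hg hK)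

variable {μ : Measure ℝ} {K : Set ℝ} {Λ : ℝ → ℝ} {q : ℕ}

theorem integral_sub_pow_mul_eq_zero (hK : IsCompact K) (hΛ : Integrable Λ μ)
    (hsupp : Function.support Λ ⊆ K) (hmom : ∀ m : ℕ, m < q → ∫ h, h ^ m * Λ h ∂μ = 0)
    (x₀ : ℝ) {k : ℕ} (hk : k < q) : ∫ h, (h - x₀) ^ k * Λ h ∂μ = 0 := by
  have hbinom : (fun h => (h - x₀) ^ k * Λ h) = fun h => ∑ m ∈ Finset.range (k + 1),
      h ^ m * Λ h * ((-1) ^ (m + k) * x₀ ^ (k - m) * k.choose m) := by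
    funext h
    rw [sub_pow, Finset.sum_mul]
    exact Finset.sum_congr rfl fun m _ => by ring
  rw [hbinom, integral_finsetSum _ fun m _ =>
    ((hΛ.continuousOn_mul_of_support_subset hK (continuous_pow m).continuousOn hsupp).mul_const _)]
  refine Finset.sum_eq_zero fun m hm => ?_
  rw [integral_mul_const, hmom m ((Finset.mem_range_succ_iff.1 hm).trans_lt hk), zero_mul]

theorem integral_sum_sub_pow_mul_eq_zero (hK : IsCompact K) (hΛ : Integrable Λ μ)
    (hsupp : Function.support Λ ⊆ K) (hmom : ∀ m : ℕ, m < q → ∫ h, h ^ m * Λ h ∂μ = 0)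
    (c : ℕ → ℝ) (x₀ : ℝ) : ∫ h, (∑ k ∈ Finset.range q, c k * (h - x₀) ^ k) * Λ h ∂μ = 0 := by
  simp_rw [Finset.sum_mul, mul_assoc]
  rw [integral_finsetSum _ fun k _ => (hΛ.continuousOn_mul_of_support_subset hK
    (by fun_prop : Continuous fun h : ℝ => (h - x₀) ^ k).continuousOn hsupp).const_mul (c k)]
  refine Finset.sum_eq_zero fun k hk => ?_
  rw [integral_const_mul, integral_sub_pow_mul_eq_zero hK hΛ hsupp hmom x₀
    (Finset.mem_range.1 hk), mul_zero]

theorem exists_abs_sub_sum_sub_pow_le {f : ℝ → ℝ} {a b C : ℝ} (hab : a < b) (q : ℕ)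
    (hf : ∀ y ∈ Icc a b, ContDiffAt ℝ q f y)
    (hC : ∀ y ∈ Icc a b, |iteratedDeriv q f y| ≤ C) :
    ∃ c : ℕ → ℝ, ∀ x ∈ Icc a b,
      |f x - ∑ k ∈ Finset.range q, c k * (x - a) ^ k| ≤ C * (b - a) ^ q := by
  rcases q with _ | n
  · exact ⟨0, fun x hx => by simpa using hC x hx⟩
  refine ⟨fun k => (k.factorial : ℝ)⁻¹ * iteratedDerivWithin k f (Icc a b) a, fun x hx => ?_⟩
  have hC' : ∀ y ∈ Icc a b, ‖iteratedDerivWithin (n + 1) f (Icc a b) y‖ ≤ C := fun y hy => by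
    rw [iteratedDerivWithin_eq_iteratedDeriv (uniqueDiffOn_Icc hab) (hf y hy) hy]
    exact hC y hy
  have htaylor := taylor_mean_remainder_bound hab.le (fun y hy => (hf y hy).contDiffWithinAt)
    hx hC'
  have hsum : taylorWithinEval f n (Icc a b) a x =
      ∑ k ∈ Finset.range (n + 1),
        (k.factorial : ℝ)⁻¹ * iteratedDerivWithin k f (Icc a b) a * (x - a) ^ k := by
    rw [taylor_within_apply]
    exact Finset.sum_congr rfl fun k _ => by rw [smul_eq_mul]; ring
  rw [← hsum, ← Real.norm_eq_abs]
  have hC0 : 0 ≤ C := (norm_nonneg _).trans (hC' a (left_mem_Icc.2 hab.le))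
  have hfact : (1 : ℝ) ≤ n.factorial := mod_cast n.factorial_pos
  calc _ ≤ C * (x - a) ^ (n + 1) / n.factorial := htaylor
    _ ≤ C * (b - a) ^ (n + 1) / 1 := by
        gcongr
        · exact sub_nonneg.2 hx.1
        · exact hx.2
    _ = C * (b - a) ^ (n + 1) := div_one _

theorem abs_integral_mul_le_of_moments {f : ℝ → ℝ} {a b C : ℝ} (hab : a < b)
    (hΛ : Integrable Λ μ) (hsupp : Function.support Λ ⊆ Icc a b)
    (hmom : ∀ m : ℕ, m < q → ∫ h, h ^ m * Λ h ∂μ = 0)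
    (hf : ∀ y ∈ Icc a b, ContDiffAt ℝ q f y) (hC : ∀ y ∈ Icc a b, |iteratedDeriv q f y| ≤ C) :
    |∫ h, f h * Λ h ∂μ| ≤ C * (b - a) ^ q * ∫ h, |Λ h| ∂μ := by
  obtain ⟨c, hc⟩ := exists_abs_sub_sum_sub_pow_le hab q hf hC
  set P : ℝ → ℝ := fun h => ∑ k ∈ Finset.range q, c k * (h - a) ^ k
  have hfΛ : Integrable (fun h => f h * Λ h) μ := hΛ.continuousOn_mul_of_support_subset
    isCompact_Icc (fun y hy => (hf y hy).continuousAt.continuousWithinAt) hsupp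
  have hPΛ : Integrable (fun h => P h * Λ h) μ := hΛ.continuousOn_mul_of_support_subset
    isCompact_Icc (by fun_prop) hsupp
  have hsplit : ∫ h, f h * Λ h ∂μ = ∫ h, (f h - P h) * Λ h ∂μ := by
    simp_rw [sub_mul]
    rw [integral_sub hfΛ hPΛ,
      integral_sum_sub_pow_mul_eq_zero isCompact_Icc hΛ hsupp hmom c a, sub_zero]
  rw [hsplit, ← Real.norm_eq_abs, ← integral_const_mul]
  refine norm_integral_le_of_norm_le (hΛ.abs.const_mul _) (Eventually.of_forall fun h => ?_)
  by_cases hh : Λ h = 0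
  · simp [hh]
  rw [norm_mul, Real.norm_eq_abs]
  exact mul_le_mul_of_nonneg_right (hc h (hsupp hh)) (abs_nonneg _)

theorem abs_iteratedDeriv_abs_rpow (p : ℝ) (n : ℕ) {z : ℝ} (hz : z ≠ 0) :
    |iteratedDeriv n (fun x : ℝ => |x| ^ p) z| =
      |(descPochhammer ℝ n).eval p| * |z| ^ (p - n) := by
  rcases hz.lt_or_gt with hneg | hpos
  · have hloc : (fun x : ℝ => |x| ^ p) =ᶠ[𝓝 z] fun x => (-x) ^ p := by
      filter_upwards [eventually_lt_nhds hneg] with x hx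
      rw [abs_of_neg hx]
    rw [hloc.iteratedDeriv_eq, iteratedDeriv_comp_neg n (fun x : ℝ => x ^ p),
      iteratedDeriv_eq_iterate, Real.iter_deriv_rpow_const, smul_eq_mul, abs_mul, abs_pow,
      abs_neg, abs_one, one_pow, one_mul, abs_mul, abs_of_neg hneg,
      abs_of_pos (Real.rpow_pos_of_pos (neg_pos.2 hneg) _)]
  · have hloc : (fun x : ℝ => |x| ^ p) =ᶠ[𝓝 z] fun x => x ^ p := by
      filter_upwards [eventually_gt_nhds hpos] with x hx
      rw [abs_of_pos hx]
    rw [hloc.iteratedDeriv_eq, iteratedDeriv_eq_iterate, Real.iter_deriv_rpow_const, abs_mul,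
      abs_of_pos hpos, abs_of_pos (Real.rpow_pos_of_pos hpos _)]

theorem abs_integral_abs_add_rpow_mul_le {p L : ℝ} (hp : p ≤ q) (hL : 0 < L)
    (hΛ : Integrable Λ μ) (hsupp : Function.support Λ ⊆ Icc (-L) L)
    (hmom : ∀ m : ℕ, m < q → ∫ h, h ^ m * Λ h ∂μ = 0) {α : ℝ} (hα : 2 * L ≤ |α|) :
    |∫ h, |h + α| ^ p * Λ h ∂μ| ≤
      |(descPochhammer ℝ q).eval p| * (|α| / 2) ^ (p - q) * (2 * L) ^ q * ∫ h, |Λ h| ∂μ := by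
  have hfar : ∀ y ∈ Icc (-L) L, |α| / 2 ≤ |y + α| := fun y hy => by
    have := abs_sub_abs_le_abs_sub α (-y)
    rw [abs_neg, sub_neg_eq_add, add_comm] at this
    linarith [abs_le.2 hy]
  have hne : ∀ y ∈ Icc (-L) L, y + α ≠ 0 := fun y hy =>
    abs_pos.1 ((by linarith : 0 < |α| / 2).trans_le (hfar y hy))
  have hbound := abs_integral_mul_le_of_moments (f := fun h => |h + α| ^ p) (neg_lt_self hL)
    hΛ hsupp hmom
    (fun y hy => ContDiffAt.rpow_const_of_ne
      ((contDiffAt_abs (hne y hy)).comp y (contDiffAt_id.add contDiffAt_const))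
      (abs_ne_zero.2 (hne y hy)))
    (fun y hy => by
      rw [iteratedDeriv_comp_add_const q (fun x => |x| ^ p) α,
        abs_iteratedDeriv_abs_rpow p q (hne y hy)]
      exact mul_le_mul_of_nonneg_left (Real.rpow_le_rpow_of_nonpos (by linarith) (hfar y hy)
        (sub_nonpos.2 hp)) (abs_nonneg _))
  rwa [sub_neg_eq_add, ← two_mul] at hbound

/-- decay of the integral of the long-memory kernel against a compactly
supported function with `q` vanishing moments. -/
theorem stmt_8 (d : ℝ) (hd : d ∈ Set.Ioo (0 : ℝ) (1 / 2)) (L : ℝ) (hL : 0 < L) (q : ℕ)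
    (Λ : ℝ → ℝ) (hΛ : Integrable Λ)
    (hsupp : Function.support Λ ⊆ Set.Icc (-L) L)
    (hmom : ∀ m : ℕ, m < q → ∫ h : ℝ, h ^ m * Λ h = 0) :
    ∃ C : ℝ, 0 < C ∧ ∀ α : ℝ, 2 * L ≤ |α| →
      |∫ h : ℝ, |h + α| ^ (2 * d - 1) * Λ h| ≤ C * |α| ^ (2 * d - 1 - q) := by
  have hp : 2 * d - 1 ≤ q := by linarith [hd.2, q.cast_nonneg (α := ℝ)]
  set C := |(descPochhammer ℝ q).eval (2 * d - 1)| * (2 * L) ^ q * (∫ h, |Λ h|) /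
    2 ^ (2 * d - 1 - q)
  refine ⟨C + 1, by positivity, fun α hα => ?_⟩
  calc _ ≤ _ := abs_integral_abs_add_rpow_mul_le hp hL hΛ hsupp hmom hα
    _ = C * |α| ^ (2 * d - 1 - q) := by rw [Real.div_rpow (abs_nonneg α) zero_le_two]; ring
    _ ≤ (C + 1) * |α| ^ (2 * d - 1 - q) := by gcongr; linarith
end

section
/- Let d ∈ (0, 1/2), let a < b be real numbers, set m = (a + b)/2, and let ν ∈ [a, m). Then ∫_m^b |λ − ν|^{−2d} dλ < ∫_a^m |λ − ν|^{−2d} dλ. -/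
/-!
After translating by `ν`, put `s = ν - a ≥ 0`, `t = m - ν > 0` and `p = 1 - 2d ∈ (0, 1)`; the
singularity sits at `0`, the left child is `[-s, t]` and the right child is `[t, s + 2t]`.
Integrating `|u| ^ (p - 1)` explicitly, `p` times the two band-pass variances are
`s ^ p + t ^ p` and `(s + 2t) ^ p - t ^ p`, and
`(s + 2t) ^ p ≤ s ^ p + (2t) ^ p = s ^ p + 2 ^ p t ^ p < s ^ p + 2 t ^ p`
by subadditivity of the concave power `x ↦ x ^ p` and `2 ^ p < 2`.
-/

open MeasureTheory intervalIntegral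

namespace Real

variable {r : ℝ}

lemma intervalIntegrable_abs_rpow (hr : -1 < r) (α β : ℝ) :
    IntervalIntegrable (fun u => |u| ^ r) volume α β := by
  have from_zero_of_nonneg :
      ∀ c : ℝ, 0 ≤ c → IntervalIntegrable (fun u => |u| ^ r) volume 0 c := by
    intro c hc
    refine (intervalIntegrable_rpow' hr).congr fun u hu => ?_
    rw [Set.uIoc_of_le hc] at hu
    simp only [abs_of_pos hu.1]
  have from_zero : ∀ c : ℝ, IntervalIntegrable (fun u => |u| ^ r) volume 0 c := by
    intro c
    rcases le_total 0 c with hc | hc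
    · exact from_zero_of_nonneg c hc
    · rw [IntervalIntegrable.iff_comp_neg, neg_zero]
      simpa only [abs_neg] using from_zero_of_nonneg (-c) (by linarith)
  exact (from_zero α).symm.trans (from_zero β)

lemma integral_abs_rpow_zero_of_nonneg (hr : -1 < r) {c : ℝ} (hc : 0 ≤ c) :
    ∫ u in (0 : ℝ)..c, |u| ^ r = c ^ (r + 1) / (r + 1) := by
  have on_nonneg : ∫ u in (0 : ℝ)..c, |u| ^ r = ∫ u in (0 : ℝ)..c, u ^ r :=
    integral_congr fun u hu => by
      rw [Set.uIcc_of_le hc] at hu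
      simp only [abs_of_nonneg hu.1]
  rw [on_nonneg, integral_rpow (Or.inl hr), zero_rpow (by linarith), sub_zero]

lemma integral_neg_zero_abs_rpow (c : ℝ) :
    ∫ u in -c..0, |u| ^ r = ∫ u in (0 : ℝ)..c, |u| ^ r := by
  simpa only [abs_neg, neg_zero, neg_neg] using
    (integral_comp_neg (a := (0 : ℝ)) (b := c) (fun u => |u| ^ r)).symm

lemma rpow_add_two_mul_lt {p s t : ℝ} (hp0 : 0 < p) (hp1 : p < 1) (hs : 0 ≤ s) (ht : 0 < t) :
    (s + 2 * t) ^ p < s ^ p + 2 * t ^ p :=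
  calc (s + 2 * t) ^ p ≤ s ^ p + (2 * t) ^ p :=
        rpow_add_le_add_rpow hs (by positivity) hp0.le hp1.le
    _ = s ^ p + 2 ^ p * t ^ p := by rw [mul_rpow zero_le_two ht.le]
    _ < s ^ p + 2 * t ^ p := by
      have h2p : (2 : ℝ) ^ p < 2 := by
        simpa only [rpow_one] using rpow_lt_rpow_of_exponent_lt one_lt_two hp1
      gcongr

lemma integral_abs_rpow_far_half_lt (hr : -1 < r) (hr0 : r < 0) {s t : ℝ} (hs : 0 ≤ s)
    (ht : 0 < t) :
    ∫ u in t..s + 2 * t, |u| ^ r < ∫ u in -s..t, |u| ^ r := by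
  have hint := intervalIntegrable_abs_rpow hr
  have near : ∫ u in -s..t, |u| ^ r = (s ^ (r + 1) + t ^ (r + 1)) / (r + 1) := by
    rw [← integral_add_adjacent_intervals (hint _ 0) (hint 0 _), integral_neg_zero_abs_rpow,
      integral_abs_rpow_zero_of_nonneg hr hs, integral_abs_rpow_zero_of_nonneg hr ht.le, add_div]
  have far : ∫ u in t..s + 2 * t, |u| ^ r = ((s + 2 * t) ^ (r + 1) - t ^ (r + 1)) / (r + 1) := by
    rw [← integral_interval_sub_left (hint 0 _) (hint 0 _),
      integral_abs_rpow_zero_of_nonneg hr (by positivity),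
      integral_abs_rpow_zero_of_nonneg hr ht.le, sub_div]
  rw [near, far, div_lt_div_iff_of_pos_right (by linarith)]
  linarith [rpow_add_two_mul_lt (p := r + 1) (by linarith) (by linarith) hs ht]

end Real

theorem stmt_11_general (d : ℝ) (hd : d ∈ Set.Ioo (0 : ℝ) (1 / 2)) (a b : ℝ)
    (m : ℝ) (hm : m = (a + b) / 2) (ν : ℝ) (hν : ν ∈ Set.Ico a m) :
    ∫ x in m..b, |x - ν| ^ (-(2 * d)) < ∫ x in a..m, |x - ν| ^ (-(2 * d)) := by
  obtain ⟨hd0, hd2⟩ := hd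
  obtain ⟨haν, hνm⟩ := hν
  have key := Real.integral_abs_rpow_far_half_lt (r := -(2 * d)) (by linarith) (by linarith)
    (sub_nonneg.2 haν) (sub_pos.2 hνm)
  rw [integral_comp_sub_right (fun u => |u| ^ (-(2 * d))),
    integral_comp_sub_right (fun u => |u| ^ (-(2 * d)))]
  convert key using 2 <;> linarith

/-- when the singularity ν lies strictly inside the left child interval,
the band-pass "variance" of the right child is strictly smaller. -/
theorem stmt_11 (d : ℝ) (hd : d ∈ Set.Ioo (0 : ℝ) (1 / 2)) (a b : ℝ) (hab : a < b)
    (m : ℝ) (hm : m = (a + b) / 2) (ν : ℝ) (hν : ν ∈ Set.Ico a m) :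
    ∫ x in m..b, |x - ν| ^ (-(2 * d)) < ∫ x in a..m, |x - ν| ^ (-(2 * d)) :=
  stmt_11_general d hd a b m hm ν hν
end

section
/- Let d ∈ (0, 1/2), let a < b be real numbers, set m = (a + b)/2, and let ν ∈ [a, (3a + b)/4]. Then (1 + 2d) · ∫_m^b |λ − ν|^{−2d} dλ ≤ ∫_a^m |λ − ν|^{−2d} dλ. -/
open MeasureTheory intervalIntegral

/-! Put `A = ν - a` and `M = m - ν`, so `0 ≤ A ≤ M` and `b - m = A + M`. On `[m, b]` the integrand
is at most `M ^ (-2d)`, so the right integral is at most `(A + M) M ^ (-2d)`. The left integral is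
`(A ^ (1-2d) + M ^ (1-2d)) / (1 - 2d)`, and `A ^ (1-2d) ≥ A M ^ (-2d)` because `A ≤ M`; hence it is
at least `(A + M) M ^ (-2d) / (1 - 2d)`. Conclude with `(1 + 2d)(1 - 2d) ≤ 1`. -/

section AbsRpow

variable {r : ℝ}

lemma integral_abs_rpow_of_nonneg (hr : -1 < r) {L : ℝ} (hL : 0 ≤ L) :
    ∫ t in (0 : ℝ)..L, |t| ^ r = L ^ (r + 1) / (r + 1) := by
  have hpos : Set.EqOn (fun t : ℝ ↦ |t| ^ r) (fun t ↦ t ^ r) (Set.uIcc 0 L) := fun t ht ↦ by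
    rw [Set.uIcc_of_le hL] at ht
    simp only [abs_of_nonneg ht.1]
  rw [integral_congr hpos, integral_rpow (Or.inl hr), Real.zero_rpow (by linarith), sub_zero]

lemma intervalIntegrable_abs_rpow_of_nonneg (hr : -1 < r) {L : ℝ} (hL : 0 ≤ L) :
    IntervalIntegrable (fun t : ℝ ↦ |t| ^ r) volume 0 L :=
  (intervalIntegrable_rpow' hr).congr fun t ht ↦ by
    rw [Set.uIoc_of_le hL] at ht
    simp only [abs_of_pos ht.1]

lemma integral_abs_rpow (hr : -1 < r) {A M : ℝ} (hA : 0 ≤ A) (hM : 0 ≤ M) :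
    ∫ t in -A..M, |t| ^ r = (A ^ (r + 1) + M ^ (r + 1)) / (r + 1) := by
  have hneg : IntervalIntegrable (fun t : ℝ ↦ |t| ^ r) volume (-A) 0 := by
    rw [IntervalIntegrable.iff_comp_neg]
    simpa only [abs_neg, neg_neg, neg_zero] using
      (intervalIntegrable_abs_rpow_of_nonneg hr hA).symm
  have hreflect : ∫ t in -A..0, |t| ^ r = ∫ t in (0 : ℝ)..A, |t| ^ r := by
    simpa only [abs_neg, neg_zero, neg_neg] using
      (integral_comp_neg (a := 0) (b := A) (fun t ↦ |t| ^ r)).symm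
  rw [← integral_add_adjacent_intervals hneg (intervalIntegrable_abs_rpow_of_nonneg hr hM),
    hreflect, integral_abs_rpow_of_nonneg hr hA, integral_abs_rpow_of_nonneg hr hM, add_div]

lemma integral_abs_sub_rpow (hr : -1 < r) {p q ν : ℝ} (hp : p ≤ ν) (hq : ν ≤ q) :
    ∫ x in p..q, |x - ν| ^ r = ((ν - p) ^ (r + 1) + (q - ν) ^ (r + 1)) / (r + 1) := by
  rw [integral_comp_sub_right (fun t ↦ |t| ^ r), ← neg_sub ν p]
  exact integral_abs_rpow hr (by linarith) (by linarith)

lemma integral_abs_sub_rpow_le (hr : r ≤ 0) {m b ν : ℝ} (hνm : ν < m) (hmb : m ≤ b) :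
    ∫ x in m..b, |x - ν| ^ r ≤ (b - m) * (m - ν) ^ r := by
  have hbound : ∀ x ∈ Set.uIoc m b, ‖|x - ν| ^ r‖ ≤ (m - ν) ^ r := fun x hx ↦ by
    rw [Set.uIoc_of_le hmb] at hx
    have hdist : m - ν ≤ |x - ν| := by rw [abs_of_pos (by linarith [hx.1])]; linarith [hx.1]
    rw [Real.norm_of_nonneg (by positivity)]
    exact Real.rpow_le_rpow_of_nonpos (by linarith) hdist hr
  calc ∫ x in m..b, |x - ν| ^ r ≤ ‖∫ x in m..b, |x - ν| ^ r‖ := Real.le_norm_self _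
    _ ≤ (m - ν) ^ r * |b - m| := norm_integral_le_of_norm_le_const hbound
    _ = (b - m) * (m - ν) ^ r := by rw [abs_of_nonneg (by linarith), mul_comm]

end AbsRpow

lemma mul_rpow_le_rpow_add_one {r L M : ℝ} (hr : r ≤ 0) (hL : 0 ≤ L) (hLM : L ≤ M) :
    L * M ^ r ≤ L ^ (r + 1) := by
  rcases hL.eq_or_lt with rfl | hL
  · simp only [zero_mul]; positivity
  rw [Real.rpow_add_one hL.ne', mul_comm L]
  exact mul_le_mul_of_nonneg_right (Real.rpow_le_rpow_of_nonpos hL hLM hr) hL.le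

/-- when ν lies in the first quarter of `[a, b]`, the band-pass "variance"
of the right child is at most `1/(1+2d)` times that of the left child. -/
theorem stmt_12 (d : ℝ) (hd : d ∈ Set.Ioo (0 : ℝ) (1 / 2)) (a b : ℝ) (hab : a < b)
    (m : ℝ) (hm : m = (a + b) / 2) (ν : ℝ) (hν : ν ∈ Set.Icc a ((3 * a + b) / 4)) :
    (1 + 2 * d) * ∫ x in m..b, |x - ν| ^ (-(2 * d)) ≤
      ∫ x in a..m, |x - ν| ^ (-(2 * d)) := by
  obtain ⟨hd0, hd2⟩ := hd
  obtain ⟨hνa, hνq⟩ := hν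
  have hνm : ν < m := by rw [hm]; linarith
  have hr : -(2 * d) ≤ 0 := by linarith
  have hc : 0 < -(2 * d) + 1 := by linarith
  set A := ν - a with hA
  set M := m - ν with hM
  have hA0 : 0 ≤ A := by linarith
  have hAM : A ≤ M := by rw [hA, hM, hm]; linarith
  have hlen : b - m = A + M := by rw [hA, hM, hm]; ring
  calc (1 + 2 * d) * ∫ x in m..b, |x - ν| ^ (-(2 * d))
      ≤ (1 + 2 * d) * ((A + M) * M ^ (-(2 * d))) := by
        rw [← hlen]
        gcongr
        exact integral_abs_sub_rpow_le hr hνm (by linarith)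
    _ ≤ (A + M) * M ^ (-(2 * d)) / (-(2 * d) + 1) := by
      rw [le_div_iff₀ hc, mul_right_comm]
      exact mul_le_of_le_one_left (by positivity) (by nlinarith)
    _ ≤ (A ^ (-(2 * d) + 1) + M ^ (-(2 * d) + 1)) / (-(2 * d) + 1) := by
      rw [add_mul]
      gcongr
      · exact mul_rpow_le_rpow_add_one hr hA0 hAM
      · exact mul_rpow_le_rpow_add_one hr (hA0.trans hAM) le_rfl
    _ = ∫ x in a..m, |x - ν| ^ (-(2 * d)) :=
      (integral_abs_sub_rpow (by linarith) hνa hνm.le).symm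
end
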